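/- Uniform-in-θ vanishing of outlier influence for the γ-general posterior: if the outlier category probability satisfies f_ω(y_1|x_1;θ) ≤ ε(ω) for all θ with ε(ω) → 0 as ω → ∞, then sup_θ |r_γ,ω(y_1|x_1;θ)| ≤ (1/γ) (M^{γ/(1+γ)} ε(ω))^γ → 0, i.e., the outlier's contribution to the γ-loss vanishes uniformly in the parameter. -/

import Mathlib

/-! The power sum of a probability vector on `M` points is smallest at the uniform distribution
(power-mean inequality), so `‖f‖_{1+γ} ≥ M^{-γ/(1+γ)}` whatever `θ` is. Hence the normalized
outlier probability `f(y) / ‖f‖_{1+γ}` is at most `M^{γ/(1+γ)} ε(ω)` uniformly in `θ`, and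
raising to the power `γ` preserves both the bound and the convergence to `0`. -/

open Filter Finset

section PowerSum

variable {ι : Type*} [Fintype ι] {p : ι → ℝ} {q : ℝ}

lemma card_pos_of_sum_eq_one (hp1 : ∑ i, p i = 1) : (0 : ℝ) < Fintype.card ι := by
  rcases isEmpty_or_nonempty ι with hι | hι
  · simp at hp1
  · exact_mod_cast Fintype.card_pos

lemma card_rpow_one_sub_le_sum_rpow (hp0 : ∀ i, 0 ≤ p i) (hp1 : ∑ i, p i = 1) (hq : 1 ≤ q) :
    (Fintype.card ι : ℝ) ^ (1 - q) ≤ ∑ i, p i ^ q := by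
  have hpow := Real.rpow_sum_le_const_mul_sum_rpow_of_nonneg univ hq (fun i _ => hp0 i)
  rw [hp1, Real.one_rpow, card_univ] at hpow
  calc (Fintype.card ι : ℝ) ^ (1 - q)
      ≤ (Fintype.card ι : ℝ) ^ (1 - q) * ((Fintype.card ι : ℝ) ^ (q - 1) * ∑ i, p i ^ q) :=
        le_mul_of_one_le_right (by positivity) hpow
    _ = ∑ i, p i ^ q := by
        rw [← mul_assoc, ← Real.rpow_add (card_pos_of_sum_eq_one hp1)]
        simp

lemma card_rpow_inv_sub_one_le_lpNorm (hp0 : ∀ i, 0 ≤ p i) (hp1 : ∑ i, p i = 1) (hq : 1 ≤ q) :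
    (Fintype.card ι : ℝ) ^ (1 / q - 1) ≤ (∑ i, p i ^ q) ^ (1 / q) := by
  have hcard := card_pos_of_sum_eq_one hp1
  calc (Fintype.card ι : ℝ) ^ (1 / q - 1) = ((Fintype.card ι : ℝ) ^ (1 - q)) ^ (1 / q) := by
        rw [← Real.rpow_mul hcard.le]
        congr 1
        field_simp
    _ ≤ (∑ i, p i ^ q) ^ (1 / q) := by
        gcongr
        exact card_rpow_one_sub_le_sum_rpow hp0 hp1 hq

lemma div_lpNorm_le_card_rpow_mul {a : ℝ} (hp0 : ∀ i, 0 ≤ p i) (hp1 : ∑ i, p i = 1)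
    (hq : 1 ≤ q) (ha : 0 ≤ a) :
    a / (∑ i, p i ^ q) ^ (1 / q) ≤ (Fintype.card ι : ℝ) ^ (1 - 1 / q) * a := by
  have hcard := card_pos_of_sum_eq_one hp1
  have hnorm := card_rpow_inv_sub_one_le_lpNorm hp0 hp1 hq
  rw [div_le_iff₀ (lt_of_lt_of_le (by positivity) hnorm)]
  calc a = (Fintype.card ι : ℝ) ^ (1 - 1 / q) * a * (Fintype.card ι : ℝ) ^ (1 / q - 1) := by
        rw [mul_right_comm, ← Real.rpow_add hcard]
        simp
    _ ≤ (Fintype.card ι : ℝ) ^ (1 - 1 / q) * a * (∑ i, p i ^ q) ^ (1 / q) := by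
        gcongr

end PowerSum

theorem gamma_loss_vanishes_uniformly_general
    {Θ : Type*}
    (M : ℕ) (γ : ℝ) (hγ : 0 < γ)
    (f : ℝ → Θ → Fin M → ℝ)
    (hnonneg : ∀ ω θ m, 0 ≤ f ω θ m)
    (hsum : ∀ ω θ, ∑ m, f ω θ m = 1)
    (y : Fin M)
    (ε : ℝ → ℝ)
    (hε : ∀ ω θ, f ω θ y ≤ ε ω)
    (hεlim : Tendsto ε atTop (nhds 0)) :
    (∀ ω θ,
      |(1 / γ) * (f ω θ y / (∑ m, (f ω θ m) ^ (1 + γ)) ^ (1 / (1 + γ))) ^ γ|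
        ≤ (1 / γ) * ((M : ℝ) ^ (γ / (1 + γ)) * ε ω) ^ γ) ∧
    Tendsto (fun ω => (1 / γ) * ((M : ℝ) ^ (γ / (1 + γ)) * ε ω) ^ γ)
      atTop (nhds 0) := by
  have hexp : γ / (1 + γ) = 1 - 1 / (1 + γ) := by field_simp; ring
  refine ⟨fun ω θ => ?_, ?_⟩
  · have hratio := div_lpNorm_le_card_rpow_mul (hnonneg ω θ) (hsum ω θ)
      (le_add_of_nonneg_right hγ.le) (hnonneg ω θ y)
    rw [Fintype.card_fin, ← hexp] at hratio
    have hbase : 0 ≤ f ω θ y / (∑ m, f ω θ m ^ (1 + γ)) ^ (1 / (1 + γ)) :=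
      div_nonneg (hnonneg ω θ y)
        (Real.rpow_nonneg (sum_nonneg fun m _ => Real.rpow_nonneg (hnonneg ω θ m) _) _)
    rw [abs_of_nonneg (by positivity)]
    gcongr
    exact hratio.trans (by gcongr; exact hε ω θ)
  · have hlim := ((hεlim.const_mul ((M : ℝ) ^ (γ / (1 + γ)))).rpow_const
      (Or.inr hγ.le)).const_mul (1 / γ)
    simpa [Real.zero_rpow hγ.ne'] using hlim

/-- Uniform-in-θ vanishing of the outlier's γ-loss: if the
outlier category probability satisfies `f ω θ y ≤ ε ω` for all `θ` with
`ε ω → 0`, then the γ-loss is bounded uniformly in `θ` by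
`(1/γ)(M^{γ/(1+γ)} ε ω)^γ`, which tends to `0`. -/
theorem gamma_loss_vanishes_uniformly
    {Θ : Type*}
    (M : ℕ) (hM : 2 ≤ M) (γ : ℝ) (hγ : 0 < γ)
    (f : ℝ → Θ → Fin M → ℝ)
    (hnonneg : ∀ ω θ m, 0 ≤ f ω θ m)
    (hsum : ∀ ω θ, ∑ m, f ω θ m = 1)
    (y : Fin M)
    (ε : ℝ → ℝ) (hεnonneg : ∀ ω, 0 ≤ ε ω)
    (hε : ∀ ω θ, f ω θ y ≤ ε ω)
    (hεlim : Tendsto ε atTop (nhds 0)) :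
    (∀ ω θ,
      |(1 / γ) * (f ω θ y / (∑ m, (f ω θ m) ^ (1 + γ)) ^ (1 / (1 + γ))) ^ γ|
        ≤ (1 / γ) * ((M : ℝ) ^ (γ / (1 + γ)) * ε ω) ^ γ) ∧
    Tendsto (fun ω => (1 / γ) * ((M : ℝ) ^ (γ / (1 + γ)) * ε ω) ^ γ)
      atTop (nhds 0) :=
  gamma_loss_vanishes_uniformly_general M γ hγ f hnonneg hsum y ε hε hεlim
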